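/- arXiv:0905.2740 — 6 statements merged into one kernel-verified Lean document; each statement's English description precedes it below -/
import Mathlib

section
/- Let (X, 𝓑) be a BIBD(b, v, r, k, λ) with r = λ + 1. Then b = v and either (k, λ) = (1, 0) (i.e., 𝓑 is a (v,1,0)-design) or (k, λ) = (v−1, v−2) (i.e., 𝓑 is a (v, v−1, v−2)-design). -/
/-- Lemma (Lemma 5(i)): a `BIBD(b, v, r, k, λ)` with `r = λ + 1` has `b = v` and is either a
`(v, 1, 0)`-design or a `(v, v−1, v−2)`-design.

Here a `BIBD(b, v, r, k, λ)` is encoded by a finite point set `X` with `|X| = v`, a family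
`B : Fin b → Finset X` of blocks, each of size `k`, such that every point lies in exactly `r`
blocks and every pair of distinct points lies in exactly `λ` blocks, with `1 ≤ k ≤ v − 1`. -/
theorem bibd_r_eq_lam_add_one {X : Type*} [Fintype X] [DecidableEq X]
    (b v r k lam : ℕ) (B : Fin b → Finset X)
    (hv : Fintype.card X = v)
    (hblock : ∀ i, (B i).card = k)
    (hr : ∀ x : X, (Finset.univ.filter fun i => x ∈ B i).card = r)
    (hlam : ∀ x y : X, x ≠ y →
      (Finset.univ.filter fun i => x ∈ B i ∧ y ∈ B i).card = lam)
    (hk1 : 1 ≤ k) (hkv : k ≤ v - 1)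
    (hrlam : r = lam + 1) :
    b = v ∧ ((k = 1 ∧ lam = 0) ∨ (k = v - 1 ∧ lam = v - 2)) := by
  -- basic size facts
  have hv2 : 2 ≤ v := by omega
  have hvk : k + 1 ≤ v := by omega
  -- Identity A : b * k = v * r
  have hA : b * k = v * r := by
    have h1 : ∀ i : Fin b, (B i).card = ∑ x : X, if x ∈ B i then 1 else 0 := by
      intro i
      rw [← Finset.card_filter]
      congr 1
      ext y; simp
    calc b * k = ∑ _i : Fin b, k := by simp [Finset.sum_const, Finset.card_univ, mul_comm]
      _ = ∑ i : Fin b, (B i).card := by simp [hblock]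
      _ = ∑ i : Fin b, ∑ x : X, if x ∈ B i then 1 else 0 :=
            Finset.sum_congr rfl (fun i _ => h1 i)
      _ = ∑ x : X, ∑ i : Fin b, if x ∈ B i then 1 else 0 := Finset.sum_comm
      _ = ∑ x : X, (Finset.univ.filter fun i => x ∈ B i).card :=
            Finset.sum_congr rfl (fun x _ => (Finset.card_filter _ _).symm)
      _ = ∑ _x : X, r := by simp [hr]
      _ = v * r := by simp [Finset.sum_const, Finset.card_univ, hv, mul_comm]
  -- pick a point
  have hne : Nonempty X := by
    rw [← Fintype.card_pos_iff]; omega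
  obtain ⟨x₀⟩ := hne
  -- Identity B : r * (k - 1) = (v - 1) * lam
  have hB : r * (k - 1) = (v - 1) * lam := by
    set F := Finset.univ.filter (fun i => x₀ ∈ B i) with hFdef
    set E := Finset.univ.erase x₀ with hEdef
    have hEcard : E.card = v - 1 := by
      rw [hEdef, Finset.card_erase_of_mem (Finset.mem_univ _), Finset.card_univ, hv]
    have h1 : ∀ i ∈ F, ((B i).erase x₀).card = k - 1 := by
      intro i hi
      rw [Finset.card_erase_of_mem (by simpa [hFdef] using (Finset.mem_filter.mp hi).2), hblock]
    have h2 : ∀ i ∈ F, ((B i).erase x₀).card = ∑ y ∈ E, if y ∈ B i then 1 else 0 := by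
      intro i _
      rw [← Finset.card_filter]
      congr 1
      ext y
      simp [hEdef, Finset.mem_erase, and_comm]
    calc r * (k - 1) = ∑ _i ∈ F, (k - 1) := by
            rw [Finset.sum_const, smul_eq_mul, hr x₀, mul_comm]
      _ = ∑ i ∈ F, ((B i).erase x₀).card := (Finset.sum_congr rfl (fun i hi => (h1 i hi).symm))
      _ = ∑ i ∈ F, ∑ y ∈ E, if y ∈ B i then 1 else 0 := Finset.sum_congr rfl h2
      _ = ∑ y ∈ E, ∑ i ∈ F, if y ∈ B i then 1 else 0 := Finset.sum_comm
      _ = ∑ y ∈ E, lam := by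
            refine Finset.sum_congr rfl (fun y hy => ?_)
            have hyx : y ≠ x₀ := (Finset.mem_erase.mp hy).1
            rw [← hlam x₀ y hyx.symm, ← Finset.card_filter]
            congr 1
            rw [hFdef, Finset.filter_filter]
      _ = (v - 1) * lam := by rw [Finset.sum_const, smul_eq_mul, hEcard]
  -- key identity : lam * v + 1 = k * (lam + 1)
  have hkey : lam * v + 1 = k * (lam + 1) := by
    obtain ⟨k', rfl⟩ : ∃ k', k = k' + 1 := ⟨k - 1, by omega⟩
    obtain ⟨v', rfl⟩ : ∃ v', v = v' + 2 := ⟨v - 2, by omega⟩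
    subst hrlam
    have hB' : (lam + 1) * k' = (v' + 1) * lam := by simpa using hB
    nlinarith [hB']
  -- k divides lam + 1
  have hk2 : k * ((lam + 1) * (lam + 1)) = lam * (b * k) + (lam + 1) := by
    rw [hA, hrlam]
    calc k * ((lam + 1) * (lam + 1)) = (k * (lam + 1)) * (lam + 1) := by ring
      _ = (lam * v + 1) * (lam + 1) := by rw [hkey]
      _ = lam * (v * (lam + 1)) + (lam + 1) := by ring
  have h3 : k * ((lam + 1) * (lam + 1)) - lam * (b * k) = lam + 1 := by
    rw [hk2, Nat.add_sub_cancel_left]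
  have hdvd : k ∣ lam + 1 := by
    rw [← h3]
    exact Nat.dvd_sub (Dvd.intro _ rfl) ⟨lam * b, by ring⟩
  -- lam + 1 ≤ k
  have hle : lam + 1 ≤ k := by
    have hm : lam * (k + 1) ≤ lam * v := Nat.mul_le_mul_left lam hvk
    nlinarith [hkey, hm]
  have hkeq : k = lam + 1 := le_antisymm (Nat.le_of_dvd (by omega) hdvd) hle
  -- b = v
  have hbv : b = v := by
    have hbk : b * k = v * k := by rw [hA, hrlam, hkeq]
    exact Nat.eq_of_mul_eq_mul_right (by omega) hbk
  refine ⟨hbv, ?_⟩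
  rcases Nat.eq_zero_or_pos lam with h0 | hpos
  · left; constructor <;> omega
  · right
    have h5 : lam * v + 1 = (lam + 1) * (lam + 1) := by rw [hkey, hkeq]
    have h6 : (lam + 1) * (lam + 1) = lam * (lam + 2) + 1 := by ring
    have h4 : lam * v = lam * (lam + 2) := by
      apply Nat.add_right_cancel (m := 1)
      rw [h5, h6]
    have hveq : v = lam + 2 := Nat.eq_of_mul_eq_mul_left hpos h4
    omega
end

section
/- Let (X, 𝓑) be a pseudo (v, k, λ)-design with k = λ + 1. Then there exists a point x ∈ X such that either x belongs to every block Bᵢ or x belongs to no block Bᵢ, and moreover the v−1 sets Bᵢ ∖ {x} (1 ≤ i ≤ v−1) are pairwise distinct and are either precisely the v−1 singleton subsets of X ∖ {x}, or precisely the v−1 subsets of X ∖ {x} of the form (X ∖ {x}) ∖ {y} with y ∈ X ∖ {x}. -/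
open Finset

lemma pseudo_helper_img {X : Type*} [Fintype X] [DecidableEq X] {n : ℕ}
    (hn : Fintype.card X = n + 1)
    (B : Fin n → Finset X) (hBinj : Function.Injective B)
    (x : X) (hmem : (∀ i, x ∈ B i) ∨ (∀ i, x ∉ B i))
    (g : X → Finset X)
    (p : Fin n → X) (hpx : ∀ i, p i ≠ x)
    (hBp : ∀ i, (B i).erase x = g (p i)) :
    Function.Injective (fun i => (B i).erase x) ∧
      (Finset.univ.image fun i => (B i).erase x) =
        (Finset.univ.erase x).image g := by
  have heinj : Function.Injective (fun i => (B i).erase x) := by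
    intro i j h
    simp only at h
    apply hBinj
    rcases hmem with hm | hm
    · rw [← Finset.insert_erase (hm i), ← Finset.insert_erase (hm j), h]
    · rw [← Finset.erase_eq_of_notMem (hm i), ← Finset.erase_eq_of_notMem (hm j), h]
  have hpinj : Function.Injective p := by
    intro i j h
    apply heinj
    simp only
    rw [hBp i, hBp j, h]
  have himgp : Finset.univ.image p = Finset.univ.erase x := by
    apply Finset.eq_of_subset_of_card_le
    · intro y hy
      simp only [Finset.mem_image] at hy
      obtain ⟨i, _, rfl⟩ := hy
      exact Finset.mem_erase.mpr ⟨hpx i, Finset.mem_univ _⟩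
    · rw [Finset.card_erase_of_mem (Finset.mem_univ x),
        Finset.card_image_of_injective _ hpinj]
      simp [hn]
  refine ⟨heinj, ?_⟩
  calc (Finset.univ.image fun i => (B i).erase x)
      = Finset.univ.image fun i => g (p i) := by
        apply Finset.image_congr; intro i _; exact hBp i
    _ = (Finset.univ.image p).image g := by rw [Finset.image_image]; rfl
    _ = (Finset.univ.erase x).image g := by rw [himgp]

/-- Theorem 6(i): a pseudo `(v, k, λ)`-design with `k = λ + 1` is obtained from a
`(v−1, 1, 0)`-design or a `(v−1, v−2, v−3)`-design by adding either an isolated point or a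
point belonging to all blocks. Concretely: there is a point `x ∈ X` which lies in all blocks
or in none of them, the `v − 1` sets `Bᵢ ∖ {x}` are pairwise distinct, and they are either
precisely the `v − 1` singleton subsets of `X ∖ {x}`, or precisely the `v − 1` subsets of
`X ∖ {x}` of the form `(X ∖ {x}) ∖ {y}` with `y ∈ X ∖ {x}`.

Here a pseudo `(v, k, λ)`-design is encoded by a finite point set `X` with `|X| = v` and a
family `B : Fin (v−1) → Finset X` of blocks, each of size `k`, any two distinct of which
intersect in exactly `λ` points, with `0 ≤ λ < k ≤ v − 1`. -/
theorem pseudo_design_k_eq_lam_add_one {X : Type*} [Fintype X] [DecidableEq X]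
    (v k lam : ℕ) (B : Fin (v - 1) → Finset X)
    (hv : Fintype.card X = v)
    (hblock : ∀ i, (B i).card = k)
    (hlam : ∀ i j, i ≠ j → (B i ∩ B j).card = lam)
    (hlk : lam < k) (hkv : k ≤ v - 1)
    (hklam : k = lam + 1) :
    ∃ x : X,
      ((∀ i, x ∈ B i) ∨ (∀ i, x ∉ B i)) ∧
      Function.Injective (fun i => (B i).erase x) ∧
      ((Finset.univ.image fun i => (B i).erase x) =
          (Finset.univ.erase x).image (fun y => ({y} : Finset X)) ∨
        (Finset.univ.image fun i => (B i).erase x) =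
          (Finset.univ.erase x).image (fun y => (Finset.univ.erase x).erase y)) := by
  have hk1 : 1 ≤ k := by omega
  have hv2 : 2 ≤ v := by omega
  have hn : Fintype.card X = (v - 1) + 1 := by rw [hv]; omega
  have hBinj : Function.Injective B := by
    intro i j hij
    by_contra hne
    have h := hlam i j hne
    rw [hij, Finset.inter_self, hblock] at h
    omega
  have hsd : ∀ i j, i ≠ j → ((B i) \ (B j)).card = 1 := by
    intro i j hij
    have h := Finset.card_inter_add_card_sdiff (B i) (B j)
    rw [hlam i j hij, hblock] at h
    omega
  by_cases hk : k = 1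
  · -- all blocks are singletons
    subst hk
    have hsing : ∀ i, ∃ a, B i = {a} := fun i => Finset.card_eq_one.mp (hblock i)
    choose p hp using hsing
    have hpinj : Function.Injective p := by
      intro i j h
      apply hBinj
      rw [hp i, hp j, h]
    have hcompl : (Finset.univ.image p)ᶜ.card = 1 := by
      rw [Finset.card_compl, Finset.card_image_of_injective _ hpinj]
      simp [hv]
      omega
    obtain ⟨x, hx⟩ := Finset.card_eq_one.mp hcompl
    have hxnot : x ∉ Finset.univ.image p := by
      have : x ∈ (Finset.univ.image p)ᶜ := hx ▸ Finset.mem_singleton_self x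
      exact Finset.mem_compl.mp this
    have hpx : ∀ i, p i ≠ x := by
      intro i h
      exact hxnot (Finset.mem_image.mpr ⟨i, Finset.mem_univ _, h⟩)
    have hmem : ∀ i, x ∉ B i := by
      intro i h
      rw [hp i, Finset.mem_singleton] at h
      exact hpx i h.symm
    have hBp : ∀ i, (B i).erase x = (fun y => ({y} : Finset X)) (p i) := by
      intro i
      rw [hp i]
      exact Finset.erase_eq_of_notMem
        (by rw [Finset.mem_singleton]; exact fun h => hpx i h.symm)
    obtain ⟨h1, h2⟩ := pseudo_helper_img hn B hBinj x (Or.inr hmem) _ p hpx hBp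
    exact ⟨x, Or.inr hmem, h1, Or.inl h2⟩
  · -- k ≥ 2
    have hk2 : 2 ≤ k := by omega
    set i0 : Fin (v - 1) := ⟨0, by omega⟩ with hi0def
    set i1 : Fin (v - 1) := ⟨1, by omega⟩ with hi1def
    have hne01 : i0 ≠ i1 := by simp [hi0def, hi1def, Fin.ext_iff]
    have hCcard : (B i0 ∩ B i1).card = lam := hlam i0 i1 hne01
    have hScard : (B i0 ∪ B i1).card = k + 1 := by
      have h := Finset.card_union_add_card_inter (B i0) (B i1)
      rw [hblock, hblock, hCcard] at h
      omega
    have hco : ∀ i, ¬ (B i0 ∩ B i1 ⊆ B i) →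
        ∃ d ∈ B i0 ∩ B i1, B i = (B i0 ∪ B i1).erase d := by
      intro i hi
      obtain ⟨d, hdC, hdB⟩ := Finset.not_subset.mp hi
      have hds : ∀ j', d ∈ B j' → i ≠ j' → B j' \ B i = {d} := by
        intro j' hdj' hij'
        obtain ⟨a, ha⟩ := Finset.card_eq_one.mp (hsd j' i (Ne.symm hij'))
        have hd : d ∈ B j' \ B i := Finset.mem_sdiff.mpr ⟨hdj', hdB⟩
        rw [ha, Finset.mem_singleton] at hd
        rw [ha, hd]
      have hi0' : i ≠ i0 := by
        rintro rfl
        exact hdB (Finset.mem_of_mem_inter_left hdC)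
      have hi1' : i ≠ i1 := by
        rintro rfl
        exact hdB (Finset.mem_of_mem_inter_right hdC)
      have h0 := hds i0 (Finset.mem_of_mem_inter_left hdC) hi0'
      have h1 := hds i1 (Finset.mem_of_mem_inter_right hdC) hi1'
      refine ⟨d, hdC, ?_⟩
      have hsub : (B i0 ∪ B i1).erase d ⊆ B i := by
        intro u hu
        rw [Finset.mem_erase, Finset.mem_union] at hu
        obtain ⟨hud, hu01⟩ := hu
        by_contra huB
        rcases hu01 with h | h
        · have : u ∈ B i0 \ B i := Finset.mem_sdiff.mpr ⟨h, huB⟩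
          rw [h0, Finset.mem_singleton] at this
          exact hud this
        · have : u ∈ B i1 \ B i := Finset.mem_sdiff.mpr ⟨h, huB⟩
          rw [h1, Finset.mem_singleton] at this
          exact hud this
      have hcard : (B i).card ≤ ((B i0 ∪ B i1).erase d).card := by
        rw [Finset.card_erase_of_mem
          (Finset.mem_union_left _ (Finset.mem_of_mem_inter_left hdC)), hScard, hblock]
        omega
      exact (Finset.eq_of_subset_of_card_le hsub hcard).symm
    have hdi : (∀ i, B i0 ∩ B i1 ⊆ B i) ∨ (∀ i, B i ⊆ B i0 ∪ B i1) := by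
      by_cases hall : ∀ i, B i0 ∩ B i1 ⊆ B i
      · exact Or.inl hall
      · right
        push_neg at hall
        obtain ⟨j, hj⟩ := hall
        obtain ⟨d, hdC, hBj⟩ := hco j hj
        have hdS : d ∈ B i0 ∪ B i1 :=
          Finset.mem_union_left _ (Finset.mem_of_mem_inter_left hdC)
        intro i
        by_cases hCi : B i0 ∩ B i1 ⊆ B i
        · have hij : i ≠ j := by rintro rfl; exact hj hCi
          have hdBi : d ∈ B i := hCi hdC
          have h1 : B i ∩ B j ⊆ (B i).erase d := by
            intro u hu
            rw [Finset.mem_inter] at hu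
            refine Finset.mem_erase.mpr ⟨?_, hu.1⟩
            rintro rfl
            rw [hBj] at hu
            exact (Finset.notMem_erase _ _) hu.2
          have hcard : ((B i).erase d).card ≤ (B i ∩ B j).card := by
            rw [hlam i j hij, Finset.card_erase_of_mem hdBi, hblock]
            omega
          have heq := Finset.eq_of_subset_of_card_le h1 hcard
          intro u huBi
          by_cases hud : u = d
          · subst hud; exact hdS
          · have humem : u ∈ B i ∩ B j := by
              rw [heq]
              exact Finset.mem_erase.mpr ⟨hud, huBi⟩
            have huj : u ∈ B j := Finset.mem_of_mem_inter_right humem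
            rw [hBj] at huj
            exact Finset.mem_of_mem_erase huj
        · obtain ⟨d', _, hBi⟩ := hco i hCi
          rw [hBi]
          exact Finset.erase_subset _ _
    rcases hdi with hCC | hSS
    · -- sunflower case
      have hone : ∀ i, (B i \ (B i0 ∩ B i1)).card = 1 := by
        intro i
        rw [Finset.card_sdiff_of_subset (hCC i), hblock, hCcard]
        omega
      have hex : ∀ i, ∃ a, B i \ (B i0 ∩ B i1) = {a} :=
        fun i => Finset.card_eq_one.mp (hone i)
      choose p hp using hex
      have hBeq : ∀ i, B i = insert (p i) (B i0 ∩ B i1) := by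
        intro i
        have h := Finset.union_sdiff_of_subset (hCC i)
        rw [hp i] at h
        rw [← h]
        ext u
        simp [or_comm]
      have hpC : ∀ i, p i ∉ B i0 ∩ B i1 := by
        intro i
        have : p i ∈ B i \ (B i0 ∩ B i1) := by rw [hp i]; exact Finset.mem_singleton_self _
        exact (Finset.mem_sdiff.mp this).2
      have hpinj : Function.Injective p := by
        intro i j h
        apply hBinj
        rw [hBeq i, hBeq j, h]
      have hbound : v - 1 ≤ v - lam := by
        have hsub : Finset.univ.image p ⊆ (B i0 ∩ B i1)ᶜ := by
          intro y hy
          simp only [Finset.mem_image] at hy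
          obtain ⟨i, _, rfl⟩ := hy
          exact Finset.mem_compl.mpr (hpC i)
        have := Finset.card_le_card hsub
        rw [Finset.card_image_of_injective _ hpinj, Finset.card_compl, hCcard, hv] at this
        simpa using this
      have hkeq : k = 2 := by omega
      have hlameq : lam = 1 := by omega
      obtain ⟨x, hxC⟩ := Finset.card_eq_one.mp (hlameq ▸ hCcard)
      have hmem : ∀ i, x ∈ B i := by
        intro i
        exact hCC i (hxC ▸ Finset.mem_singleton_self x)
      have hpx : ∀ i, p i ≠ x := by
        intro i h
        apply hpC i
        rw [hxC, Finset.mem_singleton]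
        exact h
      have hBp : ∀ i, (B i).erase x = (fun y => ({y} : Finset X)) (p i) := by
        intro i
        rw [hBeq i, hxC]
        simp [Finset.erase_insert_of_ne (hpx i)]
      obtain ⟨h1, h2⟩ := pseudo_helper_img hn B hBinj x (Or.inl hmem) _ p hpx hBp
      exact ⟨x, Or.inl hmem, h1, Or.inl h2⟩
    · -- contained in S case
      have hone : ∀ i, ((B i0 ∪ B i1) \ B i).card = 1 := by
        intro i
        rw [Finset.card_sdiff_of_subset (hSS i), hScard, hblock]
        omega
      choose q hq using fun i => Finset.card_eq_one.mp (hone i)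
      have hqS : ∀ i, q i ∈ B i0 ∪ B i1 := by
        intro i
        have : q i ∈ (B i0 ∪ B i1) \ B i := by
          rw [hq i]; exact Finset.mem_singleton_self _
        exact (Finset.mem_sdiff.mp this).1
      have hqB : ∀ i, q i ∉ B i := by
        intro i
        have : q i ∈ (B i0 ∪ B i1) \ B i := by
          rw [hq i]; exact Finset.mem_singleton_self _
        exact (Finset.mem_sdiff.mp this).2
      have hBeq : ∀ i, B i = (B i0 ∪ B i1).erase (q i) := by
        intro i
        apply Finset.eq_of_subset_of_card_le
        · exact Finset.subset_erase.mpr ⟨hSS i, hqB i⟩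
        · rw [Finset.card_erase_of_mem (hqS i), hScard, hblock]
          omega
      have hqinj : Function.Injective q := by
        intro i j h
        apply hBinj
        rw [hBeq i, hBeq j, h]
      have hbound : v - 1 ≤ k + 1 := by
        have hsub : Finset.univ.image q ⊆ B i0 ∪ B i1 := by
          intro y hy
          simp only [Finset.mem_image] at hy
          obtain ⟨i, _, rfl⟩ := hy
          exact hqS i
        have := Finset.card_le_card hsub
        rw [Finset.card_image_of_injective _ hqinj, hScard] at this
        simpa using this
      by_cases hktop : k = v - 1
      · -- S = univ
        have hSuniv : B i0 ∪ B i1 = Finset.univ := by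
          apply Finset.eq_univ_of_card
          rw [hScard, hv]
          omega
        have hcompl : (Finset.univ.image q)ᶜ.card = 1 := by
          rw [Finset.card_compl, Finset.card_image_of_injective _ hqinj]
          simp [hv]
          omega
        obtain ⟨x, hx⟩ := Finset.card_eq_one.mp hcompl
        have hxnot : x ∉ Finset.univ.image q := by
          have : x ∈ (Finset.univ.image q)ᶜ := hx ▸ Finset.mem_singleton_self x
          exact Finset.mem_compl.mp this
        have hqx : ∀ i, q i ≠ x := by
          intro i h
          exact hxnot (Finset.mem_image.mpr ⟨i, Finset.mem_univ _, h⟩)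
        have hmem : ∀ i, x ∈ B i := by
          intro i
          rw [hBeq i, hSuniv]
          exact Finset.mem_erase.mpr ⟨fun h => hqx i h.symm, Finset.mem_univ _⟩
        have hBp : ∀ i, (B i).erase x =
            (fun y => (Finset.univ.erase x).erase y) (q i) := by
          intro i
          rw [hBeq i, hSuniv]
          simp only
          rw [Finset.erase_right_comm]
        obtain ⟨h1, h2⟩ := pseudo_helper_img hn B hBinj x (Or.inl hmem) _ q hqx hBp
        exact ⟨x, Or.inl hmem, h1, Or.inr h2⟩
      · -- k = v - 2, S = univ.erase x
        have hklow : k + 2 = v := by omega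
        have hcompl : (B i0 ∪ B i1)ᶜ.card = 1 := by
          rw [Finset.card_compl, hScard, hv]
          omega
        obtain ⟨x, hx⟩ := Finset.card_eq_one.mp hcompl
        have hxnot : x ∉ B i0 ∪ B i1 := by
          have : x ∈ (B i0 ∪ B i1)ᶜ := hx ▸ Finset.mem_singleton_self x
          exact Finset.mem_compl.mp this
        have hSeq : B i0 ∪ B i1 = Finset.univ.erase x := by
          apply Finset.eq_of_subset_of_card_le
          · exact Finset.subset_erase.mpr ⟨Finset.subset_univ _, hxnot⟩
          · rw [Finset.card_erase_of_mem (Finset.mem_univ x), hScard]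
            simp [hv]
            omega
        have hqx : ∀ i, q i ≠ x := by
          intro i h
          exact hxnot (h ▸ hqS i)
        have hmem : ∀ i, x ∉ B i := by
          intro i h
          exact hxnot (hSS i h)
        have hBp : ∀ i, (B i).erase x =
            (fun y => (Finset.univ.erase x).erase y) (q i) := by
          intro i
          rw [Finset.erase_eq_of_notMem (hmem i), hBeq i, hSeq]
        obtain ⟨h1, h2⟩ := pseudo_helper_img hn B hBinj x (Or.inr hmem) _ q hqx hBp
        exact ⟨x, Or.inr hmem, h1, Or.inr h2⟩
end

section
/- Let (X, 𝓑) be a pseudo (8, 4, 2)-design. Then there exists x ∈ X such that the seven sets C₁, …, C₇, defined by Cᵢ = Bᵢ ∖ {x} if x ∈ Bᵢ and Cᵢ = (X ∖ {x}) ∖ Bᵢ if x ∉ Bᵢ, are 3-element subsets of the 7-element set X ∖ {x}, any two distinct of which intersect in exactly one point; i.e., the Cᵢ are the blocks of a (7, 3, 1)-design (a Fano plane) on X ∖ {x}. -/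
/-- Theorem 1 (Marrero–Butson), in the special case of pseudo `(8, 4, 2)`-designs: every
pseudo `(8, 4, 2)`-design arises from a `(7, 3, 1)`-design (the Fano plane) by adjoining a
new point to every block and then complementing some blocks. Concretely: there is a point
`x ∈ X` such that the seven sets `Cᵢ`, where `Cᵢ = Bᵢ ∖ {x}` if `x ∈ Bᵢ` and
`Cᵢ = (X ∖ {x}) ∖ Bᵢ` if `x ∉ Bᵢ`, are 3-element subsets of the 7-element set `X ∖ {x}`, any
two distinct of which meet in exactly one point, i.e. the `Cᵢ` form a `(7, 3, 1)`-design on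
`X ∖ {x}`.

Here a pseudo `(8, 4, 2)`-design is encoded by a finite point set `X` with `|X| = 8` and a
family `B : Fin 7 → Finset X` of blocks, each of size `4`, any two distinct of which
intersect in exactly `2` points. -/
theorem pseudo_8_4_2_design_from_fano {X : Type*} [Fintype X] [DecidableEq X]
    (B : Fin 7 → Finset X)
    (hv : Fintype.card X = 8)
    (hblock : ∀ i, (B i).card = 4)
    (hlam : ∀ i j, i ≠ j → (B i ∩ B j).card = 2) :
    ∃ x : X, ∃ C : Fin 7 → Finset X,
      (∀ i, C i = if x ∈ B i then (B i).erase x else (Finset.univ.erase x) \ B i) ∧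
      (∀ i, C i ⊆ Finset.univ.erase x) ∧
      (∀ i, (C i).card = 3) ∧
      (∀ i j, i ≠ j → (C i ∩ C j).card = 1) := by
  have hne : Nonempty X := Fintype.card_pos_iff.mp (by omega)
  obtain ⟨x⟩ := hne
  have huniv : (Finset.univ.erase x : Finset X).card = 7 := by
    rw [Finset.card_erase_of_mem (Finset.mem_univ x), Finset.card_univ, hv]
  refine ⟨x, fun i => if x ∈ B i then (B i).erase x else (Finset.univ.erase x) \ B i,
    fun i => rfl, ?_, ?_, ?_⟩
  · intro i
    by_cases h : x ∈ B i
    · simp only [h, if_pos]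
      exact Finset.erase_subset_erase x (Finset.subset_univ _)
    · simp only [h, if_neg, not_false_iff]
      exact Finset.sdiff_subset
  · intro i
    by_cases h : x ∈ B i
    · simp only [h, if_pos]
      rw [Finset.card_erase_of_mem h, hblock]
    · simp only [h, if_neg, not_false_iff]
      rw [Finset.card_sdiff_of_subset, huniv, hblock]
      intro y hy
      exact Finset.mem_erase.mpr ⟨fun hxy => h (hxy ▸ hy), Finset.mem_univ y⟩
  · intro i j hij
    have hcapij := hlam i j hij
    by_cases hi : x ∈ B i <;> by_cases hj : x ∈ B j <;>
      simp only [hi, hj, if_pos, if_neg, not_false_iff]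
    · -- both contain x
      have : (B i).erase x ∩ (B j).erase x = (B i ∩ B j).erase x := by
        ext y; simp [Finset.mem_erase, Finset.mem_inter]; tauto
      rw [this, Finset.card_erase_of_mem (Finset.mem_inter.mpr ⟨hi, hj⟩), hcapij]
    · -- x ∈ B i, x ∉ B j
      have : (B i).erase x ∩ ((Finset.univ.erase x) \ B j) = (B i \ B j).erase x := by
        ext y; simp [Finset.mem_erase, Finset.mem_inter, Finset.mem_sdiff]; tauto
      rw [this, Finset.card_erase_of_mem (Finset.mem_sdiff.mpr ⟨hi, hj⟩)]
      have h2 : (B i ∩ B j).card + (B i \ B j).card = (B i).card :=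
        Finset.card_inter_add_card_sdiff _ _
      rw [hblock, hcapij] at h2
      omega
    · -- x ∉ B i, x ∈ B j
      have : ((Finset.univ.erase x) \ B i) ∩ (B j).erase x = (B j \ B i).erase x := by
        ext y; simp [Finset.mem_erase, Finset.mem_inter, Finset.mem_sdiff]; tauto
      rw [this, Finset.card_erase_of_mem (Finset.mem_sdiff.mpr ⟨hj, hi⟩)]
      have h2 : (B j ∩ B i).card + (B j \ B i).card = (B j).card :=
        Finset.card_inter_add_card_sdiff _ _
      rw [hblock, hlam j i (Ne.symm hij)] at h2
      omega
    · -- x in neither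
      have : ((Finset.univ.erase x) \ B i) ∩ ((Finset.univ.erase x) \ B j)
          = (Finset.univ.erase x) \ (B i ∪ B j) := by
        ext y; simp [Finset.mem_erase, Finset.mem_sdiff, Finset.mem_union]; tauto
      rw [this, Finset.card_sdiff_of_subset, huniv]
      · have h2 : (B i ∪ B j).card + (B i ∩ B j).card = (B i).card + (B j).card :=
          Finset.card_union_add_card_inter _ _
        rw [hblock, hblock, hcapij] at h2
        omega
      · intro y hy
        refine Finset.mem_erase.mpr ⟨fun hxy => ?_, Finset.mem_univ y⟩
        subst hxy
        rcases Finset.mem_union.mp hy with h | h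
        · exact hi h
        · exact hj h
end

section
/- For every integer k ≥ 1, the characteristic polynomial of the adjacency matrix of the graph 𝒮_{2k+1} equals X·(X² − (k+1))·(X² − 1)^{k−1}; equivalently, the spectrum of 𝒮_{2k+1} is {±√(k+1), 0, (±1)^{k−1}}. -/
open Polynomial
open scoped Classical

/-- The adjacency matrix (over `ℝ`) of a finite simple graph. -/
noncomputable def adjMat {V : Type*} [Fintype V] (G : SimpleGraph V) : Matrix V V ℝ :=
  Matrix.of fun i j => if G.Adj i j then 1 else 0

/-- `𝒮_{2k+1}`, the subdivision of the star `K_{1,k}`: vertices are the center `Sum.inl ()`,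
the middle vertices `Sum.inr (Sum.inl i)` and the leaves `Sum.inr (Sum.inr i)`;
the center is joined to each middle vertex `aᵢ`, and `aᵢ` is joined to the leaf `bᵢ`. -/
def starSubdiv (k : ℕ) : SimpleGraph (Unit ⊕ (Fin k ⊕ Fin k)) :=
  SimpleGraph.fromRel fun x y =>
    (∃ i : Fin k, x = Sum.inl () ∧ y = Sum.inr (Sum.inl i)) ∨
    (∃ i : Fin k, x = Sum.inr (Sum.inl i) ∧ y = Sum.inr (Sum.inr i))

/-!
For real `x ∉ {0, ±1}` we compute `det (x • 1 - A)` by two Schur complements. Eliminating the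
centre (pivot `x`) couples the middle vertices through `x⁻¹ J`, with `J` the all-ones matrix;
eliminating the leaves (pivot `x`) then leaves `(x - x⁻¹) • 1 - x⁻¹ J`, a rank-one perturbation of a
scalar matrix, whose determinant is given by the matrix determinant lemma. Two polynomials that
agree at infinitely many points are equal.
-/

open Matrix

namespace Matrix

variable {K : Type*} [Field K] {n m : Type*} [Fintype n] [DecidableEq n] [Fintype m]
  [DecidableEq m]

-- The factor `a` makes the identity hold also for `a = 0` and for empty `n`.
theorem mul_det_scalar_sub_const (a b : K) :
    a * (scalar n a - of fun _ _ => b).det = a ^ Fintype.card n * (a - Fintype.card n * b) := by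
  rcases eq_or_ne a 0 with rfl | ha
  · rcases eq_or_ne (Fintype.card n) 0 with h | h <;> simp [h]
  have hfactor : scalar n a - of (fun _ _ => b) =
      a • (1 + replicateCol Unit (fun _ : n => -b / a) *
        replicateRow Unit (fun _ : n => (1 : K))) := by
    ext i j
    simp only [scalar_apply, sub_apply, diagonal_apply, of_apply, smul_apply, add_apply, one_apply,
      mul_apply, Finset.univ_unique, PUnit.default_eq_unit, replicateCol_apply, replicateRow_apply,
      mul_one, Finset.sum_const, Finset.card_singleton, one_smul, smul_eq_mul]
    split_ifs <;> field_simp <;> ring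
  rw [hfactor, det_smul, det_one_add_replicateCol_mul_replicateRow]
  simp only [dotProduct, one_mul, Finset.sum_const, Finset.card_univ, nsmul_eq_mul]
  field_simp
  ring

theorem det_fromBlocks_scalar₁₁ {x : K} (hx : x ≠ 0) (B : Matrix n m K) (C : Matrix m n K)
    (D : Matrix m m K) :
    (fromBlocks (scalar n x) B C D).det = x ^ Fintype.card n * (D - x⁻¹ • (C * B)).det := by
  let _ := invertibleOfNonzero hx
  let _ := Invertible.map (scalar n) x
  rw [det_fromBlocks₁₁, show ⅟(scalar n x) = scalar n x⁻¹ from rfl]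
  simp [scalar_apply, ← smul_one_eq_diagonal]

theorem det_fromBlocks_scalar₂₂ {x : K} (hx : x ≠ 0) (A : Matrix m m K) (B : Matrix m n K)
    (C : Matrix n m K) :
    (fromBlocks A B C (scalar n x)).det = x ^ Fintype.card n * (A - x⁻¹ • (B * C)).det := by
  let _ := invertibleOfNonzero hx
  let _ := Invertible.map (scalar n) x
  rw [det_fromBlocks₂₂, show ⅟(scalar n x) = scalar n x⁻¹ from rfl]
  simp [scalar_apply, ← smul_one_eq_diagonal]

end Matrix

section StarSubdiv

variable {K : Type*} [Field K]

def starSubdivCharmatrix (k : ℕ) (x : K) :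
    Matrix (Unit ⊕ (Fin k ⊕ Fin k)) (Unit ⊕ (Fin k ⊕ Fin k)) K :=
  fromBlocks (scalar Unit x) (-replicateRow Unit (Sum.elim 1 0))
    (-replicateCol Unit (Sum.elim 1 0))
    (fromBlocks (scalar (Fin k) x) (-1) (-1) (scalar (Fin k) x))

theorem scalar_sub_adjMat_starSubdiv (k : ℕ) (x : ℝ) :
    scalar _ x - adjMat (starSubdiv k) = starSubdivCharmatrix k x := by
  ext (_ | i | i) (_ | j | j) <;>
    simp [starSubdivCharmatrix, adjMat, starSubdiv, scalar_apply, diagonal_apply,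
      Matrix.one_apply, eq_comm]

theorem det_starSubdivCharmatrix {x : K} (hx : x ≠ 0) (k : ℕ) :
    (x ^ 2 - 1) * (starSubdivCharmatrix k x).det = x * (x ^ 2 - (k + 1)) * (x ^ 2 - 1) ^ k := by
  have hcenter : fromBlocks (scalar (Fin k) x) (-1) (-1) (scalar (Fin k) x) -
        x⁻¹ • (-replicateCol Unit (Sum.elim 1 0 : Fin k ⊕ Fin k → K) *
          -replicateRow Unit (Sum.elim 1 0 : Fin k ⊕ Fin k → K)) =
      fromBlocks (scalar (Fin k) x - of fun _ _ => x⁻¹) (-1) (-1) (scalar (Fin k) x) := by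
    ext (i | i) (j | j) <;> simp [mul_apply]
  have hleaves : scalar (Fin k) x - (of fun _ _ => x⁻¹) - x⁻¹ • (-1 * -1) =
      scalar (Fin k) (x - x⁻¹) - of fun _ _ => x⁻¹ := by
    ext i j
    simp only [scalar_apply, mul_neg, mul_one, neg_neg, Matrix.sub_apply, diagonal_apply,
      of_apply, Matrix.smul_apply, one_apply, smul_eq_mul, mul_ite, mul_zero]
    split_ifs <;> ring
  have hrankOne := mul_det_scalar_sub_const (n := Fin k) (x - x⁻¹) x⁻¹
  rw [Fintype.card_fin] at hrankOne
  rw [starSubdivCharmatrix, det_fromBlocks_scalar₁₁ hx, hcenter, det_fromBlocks_scalar₂₂ hx,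
    hleaves, Fintype.card_unit, Fintype.card_fin, pow_one]
  have hxa : x * (x - x⁻¹) = x ^ 2 - 1 := by rw [mul_sub, mul_inv_cancel₀ hx]; ring
  have hxk : x * (x - x⁻¹ - k * x⁻¹) = x * (x - x⁻¹) - k := by
    rw [mul_sub x _ (k * x⁻¹), mul_left_comm, mul_inv_cancel₀ hx, mul_one]
  generalize x - x⁻¹ = a at hrankOne hxa hxk ⊢
  calc _ = x * x ^ k * x * (a * (scalar (Fin k) a - of fun _ _ => x⁻¹).det) := by
        rw [← hxa]; ring
    _ = x * (x * a) ^ k * (x * (a - k * x⁻¹)) := by rw [hrankOne]; ring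
    _ = _ := by rw [hxk, hxa]; ring

end StarSubdiv

/-- The characteristic polynomial of the adjacency matrix of `𝒮_{2k+1}` equals
`X (X² − (k+1)) (X² − 1)^{k−1}`. -/
theorem charpoly_starSubdiv (k : ℕ) (hk : 1 ≤ k) :
    (adjMat (starSubdiv k)).charpoly =
      X * (X ^ 2 - C ((k : ℝ) + 1)) * (X ^ 2 - 1) ^ (k - 1) := by
  obtain ⟨m, rfl⟩ := Nat.exists_eq_add_of_le' hk
  refine eq_of_infinite_eval_eq _ _ ((Set.toFinite {0, 1, -1}).infinite_compl.mono fun x hx => ?_)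
  simp only [Set.mem_compl_iff, Set.mem_insert_iff, Set.mem_singleton_iff, not_or] at hx
  obtain ⟨hx0, hx1⟩ := hx
  have hsq : x ^ 2 - 1 ≠ 0 := sub_ne_zero.2 (sq_ne_one_iff.2 hx1)
  refine mul_left_cancel₀ hsq ?_
  rw [eval_charpoly, scalar_sub_adjMat_starSubdiv, det_starSubdivCharmatrix hx0,
    Nat.add_sub_cancel]
  simp only [eval_mul, eval_X, eval_sub, eval_pow, eval_C, eval_one]
  push_cast
  ring
end

section
/- For every integer k ≥ 2, the characteristic polynomial of the adjacency matrix of the graph ℋ_{k,k+1} equals X·(X² − (k² − k + 1))·(X² − 1)^{k−1}; equivalently, the spectrum of ℋ_{k,k+1} is {±√(k² − k + 1), 0, (±1)^{k−1}}. -/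
open Polynomial
open scoped Classical

/-- `ℋ_{k,k+1}`: the graph obtained from `ℒ_{k,k}` (complete bipartite `K_{k,k}` minus a
perfect matching, on parts `{uᵢ = Sum.inr (Sum.inl i)}` and `{wⱼ = Sum.inr (Sum.inr j)}`,
with `uᵢ ~ wⱼ` iff `i ≠ j`) by adding one new vertex `Sum.inl ()` adjacent to all `uᵢ`. -/
def Hgraph (k : ℕ) : SimpleGraph (Unit ⊕ (Fin k ⊕ Fin k)) :=
  SimpleGraph.fromRel fun x y =>
    (∃ i : Fin k, x = Sum.inl () ∧ y = Sum.inr (Sum.inl i)) ∨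
    (∃ i j : Fin k, i ≠ j ∧ x = Sum.inr (Sum.inl i) ∧ y = Sum.inr (Sum.inr j))

namespace CharpolyH
open Matrix Finset

lemma det_aux {K : Type*} [Field K] {k : ℕ} (hk : 1 ≤ k) (a c : K) (ha : a ≠ 0) :
    (Matrix.of fun i j : Fin k => if i = j then a + c else c).det
      = a ^ (k - 1) * (a + k * c) := by
  have h1 : (Matrix.of fun i j : Fin k => if i = j then a + c else c)
      = a • (1 + Matrix.replicateCol Unit (fun _ : Fin k => c / a) *
          Matrix.replicateRow Unit (fun _ : Fin k => (1 : K))) := by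
    ext i j
    by_cases h : i = j <;>
      · simp [h, Matrix.mul_apply, Matrix.one_apply, Matrix.smul_apply, smul_eq_mul]
        field_simp
  have hk' : a ^ k = a ^ (k - 1) * a := by
    conv_lhs => rw [← Nat.succ_pred_eq_of_pos hk]
    rw [pow_succ, Nat.pred_eq_sub_one]
  rw [h1, Matrix.det_smul, Matrix.det_one_add_replicateCol_mul_replicateRow]
  simp only [Fintype.card_fin, dotProduct, Finset.sum_const, card_univ, Fintype.card_fin,
    nsmul_eq_mul, mul_one, one_mul]
  rw [hk']
  field_simp

noncomputable def x0 : RatFunc ℝ := algebraMap ℝ[X] (RatFunc ℝ) X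

lemma hx0 : x0 ≠ 0 := by
  intro h
  have h2 : algebraMap ℝ[X] (RatFunc ℝ) X = algebraMap ℝ[X] (RatFunc ℝ) 0 := by
    simpa [x0] using h
  exact Polynomial.X_ne_zero (RatFunc.algebraMap_injective ℝ h2)

lemma ha0 : x0 - x0⁻¹ ≠ 0 := by
  intro h
  have h1 : x0 = x0⁻¹ := sub_eq_zero.mp h
  have h2 : x0 * x0 = 1 := by
    nth_rewrite 1 [h1]
    exact inv_mul_cancel₀ hx0
  have h3 : algebraMap ℝ[X] (RatFunc ℝ) (X * X) = algebraMap ℝ[X] (RatFunc ℝ) 1 := by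
    simpa [_root_.map_mul, x0] using h2
  have h4 := RatFunc.algebraMap_injective ℝ h3
  have := congrArg (Polynomial.eval (2 : ℝ)) h4
  simp at this
  norm_num at this

noncomputable def matA (k : ℕ) : Matrix (Unit ⊕ Fin k) (Unit ⊕ Fin k) (RatFunc ℝ) :=
  Matrix.fromBlocks (Matrix.of fun _ _ => x0) (Matrix.of fun _ _ => -1)
    (Matrix.of fun _ _ => -1) (Matrix.diagonal fun _ => x0)

noncomputable def matB (k : ℕ) : Matrix (Unit ⊕ Fin k) (Fin k) (RatFunc ℝ) :=
  Matrix.of fun p j => Sum.elim (fun _ => 0) (fun i => if i = j then 0 else -1) p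

noncomputable def matC (k : ℕ) : Matrix (Fin k) (Unit ⊕ Fin k) (RatFunc ℝ) :=
  Matrix.of fun i q => Sum.elim (fun _ => 0) (fun j => if j = i then 0 else -1) q

noncomputable def matD (k : ℕ) : Matrix (Fin k) (Fin k) (RatFunc ℝ) := Matrix.diagonal fun _ => x0

lemma blocks_eq (k : ℕ) :
    ((charmatrix (adjMat (Hgraph k))).map (algebraMap ℝ[X] (RatFunc ℝ))).submatrix
        (Equiv.sumAssoc Unit (Fin k) (Fin k)) (Equiv.sumAssoc Unit (Fin k) (Fin k))
      = Matrix.fromBlocks (matA k) (matB k) (matC k) (matD k) := by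
  ext p q
  rcases p with (p | p) | p <;> rcases q with (q | q) | q <;>
    simp [charmatrix_apply, Matrix.diagonal_apply, adjMat, Hgraph, SimpleGraph.fromRel_adj,
      matA, matB, matC, matD, x0, Matrix.one_apply, Matrix.smul_apply, smul_eq_mul,
      apply_ite (algebraMap ℝ[X] (RatFunc ℝ)), eq_comm] <;>
    split_ifs <;> simp_all

lemma sum_aux {k : ℕ} (hk : 2 ≤ k) (i i' : Fin k) :
    ∑ j : Fin k, ((if i = j then 0 else -1) * x0⁻¹ * (if i' = j then (0 : RatFunc ℝ) else -1))
      = x0⁻¹ * (if i = i' then (k : RatFunc ℝ) - 1 else (k : RatFunc ℝ) - 2) := by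
  have h1 : ∀ j : Fin k, (if i = j then 0 else -1) * x0⁻¹ * (if i' = j then (0 : RatFunc ℝ) else -1)
      = x0⁻¹ * (if ¬ i = j ∧ ¬ i' = j then 1 else 0) := by
    intro j
    split_ifs <;> simp_all <;> ring
  rw [Finset.sum_congr rfl fun j _ => h1 j, ← Finset.mul_sum, Finset.sum_boole]
  congr 1
  have hfil : (univ.filter fun j => ¬ i = j ∧ ¬ i' = j) = ({i, i'} : Finset (Fin k))ᶜ := by
    ext j
    simp [not_or, eq_comm, and_comm]
  rw [hfil, Finset.card_compl]
  by_cases h : i = i'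
  · subst h
    simp only [Finset.pair_eq_singleton, Finset.card_singleton, Fintype.card_fin, if_pos rfl]
    rw [Nat.cast_sub (by omega)]
    simp
  · rw [Finset.card_pair h]
    simp only [Fintype.card_fin, if_neg h]
    rw [Nat.cast_sub (by omega)]
    simp

end CharpolyH

open CharpolyH Matrix Finset in
/-- The characteristic polynomial of the adjacency matrix of `ℋ_{k,k+1}` equals
`X (X² − (k² − k + 1)) (X² − 1)^{k−1}` for `k ≥ 2`. -/
theorem charpoly_Hgraph (k : ℕ) (hk : 2 ≤ k) :
    (adjMat (Hgraph k)).charpoly =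
      X * (X ^ 2 - C ((k : ℝ) ^ 2 - k + 1)) * (X ^ 2 - 1) ^ (k - 1) := by
  have hk1 : 1 ≤ k := by omega
  apply RatFunc.algebraMap_injective ℝ
  rw [show (adjMat (Hgraph k)).charpoly = (charmatrix (adjMat (Hgraph k))).det from rfl,
    RingHom.map_det, RingHom.mapMatrix_apply,
    ← Matrix.det_submatrix_equiv_self (Equiv.sumAssoc Unit (Fin k) (Fin k)),
    CharpolyH.blocks_eq k]
  haveI : Invertible (matD k) :=
    ⟨Matrix.diagonal fun _ => x0⁻¹,
      by simp [matD, Matrix.diagonal_mul_diagonal, inv_mul_cancel₀ hx0],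
      by simp [matD, Matrix.diagonal_mul_diagonal, mul_inv_cancel₀ hx0]⟩
  rw [Matrix.det_fromBlocks₂₂]
  have hinv : ⅟(matD k) = Matrix.diagonal fun _ => x0⁻¹ :=
    invOf_eq_right_inv (by simp [matD, Matrix.diagonal_mul_diagonal, mul_inv_cancel₀ hx0])
  set a : RatFunc ℝ := x0 - x0⁻¹ with ha
  set c : RatFunc ℝ := -((k : RatFunc ℝ) - 1) * x0⁻¹ with hc
  have hBD : matB k * (Matrix.diagonal fun _ : Fin k => x0⁻¹)
      = Matrix.of fun p j => matB k p j * x0⁻¹ := by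
    ext p j
    rw [Matrix.mul_diagonal]
    rfl
  have hS : matA k - matB k * ⅟(matD k) * matC k
      = Matrix.fromBlocks (Matrix.of fun _ _ => x0) (Matrix.of fun _ _ => -1)
          (Matrix.of fun _ _ => -1)
          (Matrix.of fun i j : Fin k => if i = j then x0 - ((k : RatFunc ℝ) - 1) * x0⁻¹
            else -((k : RatFunc ℝ) - 2) * x0⁻¹) := by
    rw [hinv, hBD]
    ext p q
    rcases p with p | p <;> rcases q with q | q
    · simp [matA, matB, matC, Matrix.mul_apply]
    · simp [matA, matB, matC, Matrix.mul_apply]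
    · simp [matA, matB, matC, Matrix.mul_apply]
    · simp only [Matrix.sub_apply, Matrix.mul_apply, Matrix.of_apply, matA, matB, matC,
        Matrix.fromBlocks_apply₂₂, Sum.elim_inr, Matrix.diagonal_apply]
      rw [sum_aux hk p q]
      split_ifs <;> ring
  rw [hS]
  haveI : Invertible (Matrix.of fun _ _ : Unit => x0) :=
    ⟨Matrix.of fun _ _ => x0⁻¹,
      by ext a b; simp [Matrix.mul_apply, inv_mul_cancel₀ hx0, Matrix.one_apply],
      by ext a b; simp [Matrix.mul_apply, mul_inv_cancel₀ hx0, Matrix.one_apply]⟩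
  rw [Matrix.det_fromBlocks₁₁]
  have hinv2 : ⅟(Matrix.of fun _ _ : Unit => x0) = Matrix.of fun _ _ => x0⁻¹ :=
    invOf_eq_right_inv (by ext a b; simp [Matrix.mul_apply, mul_inv_cancel₀ hx0, Matrix.one_apply])
  have hS2 : (Matrix.of fun i j : Fin k => if i = j then x0 - ((k : RatFunc ℝ) - 1) * x0⁻¹
        else -((k : RatFunc ℝ) - 2) * x0⁻¹)
      - (Matrix.of fun _ _ => -1 : Matrix (Fin k) Unit (RatFunc ℝ))
        * ⅟(Matrix.of fun _ _ : Unit => x0)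
        * (Matrix.of fun _ _ => -1 : Matrix Unit (Fin k) (RatFunc ℝ))
      = Matrix.of fun i j : Fin k => if i = j then a + c else c := by
    rw [hinv2]
    ext i j
    simp only [Matrix.sub_apply, Matrix.mul_apply, Matrix.of_apply, Finset.univ_unique,
      Finset.sum_singleton]
    split_ifs <;> · simp only [ha, hc]; ring
  rw [hS2, det_aux hk1 a c ha0]
  have hdetD : (matD k).det = x0 ^ k := by
    simp [matD, Matrix.det_diagonal]
  have hdetA : (Matrix.of fun _ _ : Unit => x0).det = x0 := by
    simp [Matrix.det_unique]
  rw [hdetD, hdetA]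
  -- right-hand side
  have hC : (C ((k : ℝ) ^ 2 - (k : ℝ) + 1) : ℝ[X]) = ((k : ℝ[X]) ^ 2 - (k : ℝ[X]) + 1) := by
    push_cast
    simp [map_sub, map_add, map_pow, _root_.map_one, map_natCast]
  rw [hC]
  have hX : algebraMap ℝ[X] (RatFunc ℝ) X = x0 := rfl
  simp only [_root_.map_mul, map_sub, map_add, map_pow, _root_.map_one, map_natCast, hX]
  -- final algebraic identity
  obtain ⟨m, rfl⟩ : ∃ m, k = m + 1 := ⟨k - 1, by omega⟩
  simp only [Nat.add_sub_cancel]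
  have hrw : x0 - x0⁻¹ = (x0 ^ 2 - 1) * x0⁻¹ := by
    rw [sub_mul, one_mul, pow_two, mul_assoc, mul_inv_cancel₀ hx0, mul_one]
  rw [ha, hc, hrw, mul_pow]
  push_cast
  have hpow : x0 ^ m * x0⁻¹ ^ m = 1 := by
    rw [← mul_pow, mul_inv_cancel₀ hx0, one_pow]
  linear_combination
    (x0 * (x0 ^ 2 - 1) ^ m * ((x0 ^ 2 - 1) - ((m : RatFunc ℝ) + 1) * m) * (x0 ^ m * x0⁻¹ ^ m)) *
        mul_inv_cancel₀ hx0 +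
      (x0 * (x0 ^ 2 - 1) ^ m * ((x0 ^ 2 - 1) - ((m : RatFunc ℝ) + 1) * m)) * hpow
end

section
/- For every integer k ≥ 3, the characteristic polynomials of the adjacency matrices of ℛ_{2k+1} and 𝒬_{2k+1} are both equal to X·(X² − 4(k−2))·(X² − 1)^{k−1}; in particular, ℛ_{2k+1} and 𝒬_{2k+1} are cospectral, with spectrum {±2√(k−2), 0, (±1)^{k−1}}. -/
/-!
Split the `k` rows as `(k - 3) + 3` and the `k + 1` columns as `(k - 3) + 4`. Both biadjacency
matrices then read `N = [[I, J], [O, B]]`, where the `3 × 4` corner `B` is `Ĩ₃` for `ℛ`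
and `[0 | J₃ - I₃]` for `𝒬`. Both corners satisfy `B Bᵀ = I + J` and have row sums `2`, so in
both cases `N Nᵀ = I + w wᵀ` with `w = (2, …, 2, 1, 1, 1)`, `|w|² = 4k - 9`, whence
`χ(N Nᵀ) = (X - 1)^(k-1) (X - 4(k - 2))`. Finally, for a bipartite graph with a `k × (k + 1)`
biadjacency matrix `N`, `χ(A)(X) = X · χ(N Nᵀ)(X²)`.
-/

open Polynomial
open scoped Classical

/-- The bipartite graph with "bipartite adjacency relation" `P`: vertex set `α ⊕ β`, with
`Sum.inl i` adjacent to `Sum.inr j` iff `P i j` (rows and columns of the bipartite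
adjacency matrix). -/
def bipGraph {α β : Type*} (P : α → β → Prop) : SimpleGraph (α ⊕ β) :=
  SimpleGraph.fromRel fun x y => ∃ i j, x = Sum.inl i ∧ y = Sum.inr j ∧ P i j

/-- `ℛ_{2k+1}` (for `k ≥ 3`): the bipartite graph whose `k × (k+1)` bipartite adjacency
matrix is the block matrix `[[I_{k−3}, J], [O, Ĩ₃]]`, where `Ĩ₃ = [I₃ | 1]`. -/
def Rgraph (k : ℕ) : SimpleGraph (Fin k ⊕ Fin (k + 1)) :=
  bipGraph fun (i : Fin k) (j : Fin (k + 1)) =>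
    (i.1 < k - 3 ∧ ((j.1 : ℕ) = i.1 ∨ k - 3 ≤ j.1)) ∨
    (k - 3 ≤ i.1 ∧ ((j.1 : ℕ) = i.1 ∨ j.1 = k))

/-- `𝒬_{2k+1}` (for `k ≥ 3`): the bipartite graph whose `k × (k+1)` bipartite adjacency
matrix is the block matrix `[[Ĩ_{k−3}, J], [O, J₃ − I₃]]`, where `Ĩ_{k−3} = [I_{k−3} | 1]`. -/
def Qgraph (k : ℕ) : SimpleGraph (Fin k ⊕ Fin (k + 1)) :=
  bipGraph fun (i : Fin k) (j : Fin (k + 1)) =>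
    (i.1 < k - 3 ∧ ((j.1 : ℕ) = i.1 ∨ k - 3 ≤ j.1)) ∨
    (k - 3 ≤ i.1 ∧ k - 2 ≤ j.1 ∧ j.1 - (k - 2) ≠ i.1 - (k - 3))

open Matrix

section LinearAlgebra

variable {R : Type*} [CommRing R] {m n : Type*} [Fintype m] [Fintype n]
  [DecidableEq m] [DecidableEq n]

theorem charpoly_fromBlocks_zero₁₁_zero₂₂ (A : Matrix m n R) (B : Matrix n m R) :
    X ^ Fintype.card m * (fromBlocks 0 A B 0).charpoly =
      X ^ Fintype.card n * (A * B).charpoly.comp (X ^ 2) := by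
  have hcomp : (A * B).charpoly.comp (X ^ 2) = (scalar m (X ^ 2) - (A * B).map C).det := by
    rw [charpoly, Polynomial.comp, ← coe_eval₂RingHom, RingHom.map_det]
    congr 1
    ext i j : 1
    by_cases h : i = j <;> simp [h, -Matrix.map_mul]
  -- Left multiplication by `[[X, A], [0, X]]` makes the characteristic matrix block triangular.
  have hL : fromBlocks (scalar m X) (A.map C) 0 (scalar n X) * charmatrix (fromBlocks 0 A B 0) =
      fromBlocks (scalar m (X ^ 2) - (A * B).map C) 0 (-(X : R[X]) • B.map C)
        (scalar n (X ^ 2)) := by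
    rw [charmatrix_fromBlocks, fromBlocks_multiply]
    simp [charmatrix, scalar_apply, ← smul_eq_diagonal_mul, ← smul_eq_mul_diagonal, sq,
      sub_eq_add_neg, ← diagonal_smul]
  have hdet := congrArg det hL
  rw [det_mul, det_fromBlocks_zero₂₁, det_fromBlocks_zero₁₂, ← hcomp, ← charpoly] at hdet
  simp only [scalar_apply, det_diagonal, Finset.prod_const, Finset.card_univ] at hdet
  refine (isRegular_X_pow (R := R) (Fintype.card n)).left ?_
  linear_combination hdet

theorem charpoly_fromBlocks_zero_transpose_of_charpoly_mul_transpose {k : ℕ}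
    (N : Matrix (Fin k) (Fin (k + 1)) R) (c : R)
    (hN : (N * Nᵀ).charpoly = (X - 1) ^ (k - 1) * (X - C c)) :
    (fromBlocks 0 N Nᵀ 0).charpoly = X * (X ^ 2 - C c) * (X ^ 2 - 1) ^ (k - 1) := by
  refine (isRegular_X_pow (R := R) k).left ?_
  have h := charpoly_fromBlocks_zero₁₁_zero₂₂ N Nᵀ
  simp only [Fintype.card_fin, hN, mul_comp, pow_comp, sub_comp, X_comp, one_comp, C_comp] at h
  linear_combination h

theorem charpoly_one_add_vecMulVec [Nonempty n] (u v : n → R) :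
    (1 + vecMulVec u v).charpoly = (X - 1) ^ (Fintype.card n - 1) * (X - C (1 + u ⬝ᵥ v)) := by
  have h : 1 + vecMulVec u v = vecMulVec u v - scalar n (-1 : R) := by
    rw [map_neg, map_one, sub_neg_eq_add, add_comm]
  obtain ⟨c, hc⟩ : ∃ c, Fintype.card n = c + 1 := Nat.exists_eq_add_one.mpr Fintype.card_pos
  rw [h, charpoly_sub_scalar, charpoly_vecMulVec, hc, Nat.add_sub_cancel]
  simp only [smul_eq_C_mul, sub_comp, mul_comp, C_comp, X_pow_comp, C_neg, C_1, C_add,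
    ← sub_eq_add_neg]
  ring

theorem fromBlocks_one_ones_zero_mul_transpose {m' n' : Type*} [DecidableEq m'] [Fintype n']
    (r : R) (B : Matrix m' n' R) (hB : B * Bᵀ = 1 + vecMulVec 1 1)
    (hrow : B *ᵥ 1 = fun _ => r)
    (hcard : (Fintype.card n' : R) = r ^ 2) :
    fromBlocks (1 : Matrix m m R) (vecMulVec 1 1) 0 B *
        (fromBlocks (1 : Matrix m m R) (vecMulVec 1 1) 0 B)ᵀ =
      1 + vecMulVec (Sum.elim (fun _ => r) fun _ => 1) (Sum.elim (fun _ => r) fun _ => 1) := by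
  have hrow' (i : m') : ∑ j, B i j = r := by simpa [mulVec, dotProduct] using congrFun hrow i
  rw [fromBlocks_transpose, fromBlocks_multiply, hB]
  ext (i | i) (j | j) <;> simp [mul_apply, vecMulVec_apply, one_apply, hrow', hcard, sq]

end LinearAlgebra

theorem charpoly_mul_transpose_of_submatrix_eq {R : Type*} [CommRing R] (n : ℕ)
    (N : Matrix (Fin (n + 3)) (Fin (n + 4)) R) (B : Matrix (Fin 3) (Fin 4) R)
    (hB : B * Bᵀ = 1 + vecMulVec 1 1) (hrow : B *ᵥ 1 = fun _ => 2)
    (hN : N.submatrix finSumFinEquiv finSumFinEquiv = fromBlocks 1 (vecMulVec 1 1) 0 B) :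
    (N * Nᵀ).charpoly = (X - 1) ^ (n + 2) * (X - C (4 * ((n : R) + 1))) := by
  have hw : (1 : R) + (Sum.elim (fun _ => 2) fun _ => 1 : Fin n ⊕ Fin 3 → R) ⬝ᵥ
      (Sum.elim (fun _ => 2) fun _ => 1) = 4 * ((n : R) + 1) := by
    simp only [dotProduct, Fintype.sum_sum_type, Sum.elim_inl, Sum.elim_inr, Finset.sum_const,
      Finset.card_univ, Fintype.card_fin, nsmul_eq_mul]
    ring
  rw [← charpoly_reindex finSumFinEquiv.symm, reindex_apply, Equiv.symm_symm,
    ← submatrix_mul_equiv _ _ _ finSumFinEquiv, ← transpose_submatrix, hN,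
    fromBlocks_one_ones_zero_mul_transpose 2 B hB hrow (by norm_num),
    charpoly_one_add_vecMulVec, hw, Fintype.card_sum, Fintype.card_fin, Fintype.card_fin]
  rfl

theorem adjMat_bipGraph {α β : Type*} [Fintype α] [Fintype β] (P : α → β → Prop) :
    adjMat (bipGraph P) =
      fromBlocks 0 (adjMat (bipGraph P)).toBlocks₁₂ (adjMat (bipGraph P)).toBlocks₁₂ᵀ 0 := by
  ext (i | i) (j | j) <;> simp [adjMat, bipGraph, toBlocks₁₂, or_comm]

theorem bipGraph_adj_inl_inr {α β : Type*} (P : α → β → Prop) (i : α) (j : β) :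
    (bipGraph P).Adj (Sum.inl i) (Sum.inr j) ↔ P i j := by
  simp [bipGraph]

theorem charpoly_adjMat_bipGraph_of_submatrix_eq (n : ℕ)
    (P : Fin (n + 3) → Fin (n + 3 + 1) → Prop) (B : Matrix (Fin 3) (Fin 4) ℝ)
    (hB : B * Bᵀ = 1 + vecMulVec 1 1) (hrow : B *ᵥ 1 = fun _ => 2)
    (hN : (adjMat (bipGraph P)).toBlocks₁₂.submatrix finSumFinEquiv
      (finSumFinEquiv : Fin n ⊕ Fin 4 ≃ _) = fromBlocks 1 (vecMulVec 1 1) 0 B) :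
    (adjMat (bipGraph P)).charpoly =
      X * (X ^ 2 - C (4 * (((n + 3 : ℕ) : ℝ) - 2))) * (X ^ 2 - 1) ^ (n + 3 - 1) := by
  rw [adjMat_bipGraph, charpoly_fromBlocks_zero_transpose_of_charpoly_mul_transpose]
  rw [charpoly_mul_transpose_of_submatrix_eq n _ B hB hrow hN]
  congr 3
  push_cast
  ring

def cornerR : Matrix (Fin 3) (Fin 4) ℝ :=
  !![1, 0, 0, 1; 0, 1, 0, 1; 0, 0, 1, 1]

def cornerQ : Matrix (Fin 3) (Fin 4) ℝ :=
  !![0, 0, 1, 1; 0, 1, 0, 1; 0, 1, 1, 0]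

theorem cornerR_mul_transpose : cornerR * cornerRᵀ = 1 + vecMulVec 1 1 := by
  ext i j
  fin_cases i <;> fin_cases j <;>
    simp [cornerR, mul_apply, Fin.sum_univ_succ, one_apply, one_add_one_eq_two]

theorem cornerQ_mul_transpose : cornerQ * cornerQᵀ = 1 + vecMulVec 1 1 := by
  ext i j
  fin_cases i <;> fin_cases j <;>
    simp [cornerQ, mul_apply, Fin.sum_univ_succ, one_apply, one_add_one_eq_two]

theorem cornerR_mulVec_one : cornerR *ᵥ 1 = fun _ => 2 := by
  ext i
  fin_cases i <;> simp [cornerR, mulVec, dotProduct, Fin.sum_univ_succ, one_add_one_eq_two]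

theorem cornerQ_mulVec_one : cornerQ *ᵥ 1 = fun _ => 2 := by
  ext i
  fin_cases i <;> simp [cornerQ, mulVec, dotProduct, Fin.sum_univ_succ, one_add_one_eq_two]

theorem toBlocks₁₂_adjMat_Rgraph_submatrix (n : ℕ) :
    (adjMat (Rgraph (n + 3))).toBlocks₁₂.submatrix finSumFinEquiv
        (finSumFinEquiv : Fin n ⊕ Fin 4 ≃ _) =
      fromBlocks 1 (vecMulVec 1 1) 0 cornerR := by
  ext (i | i) (j | j) <;>
    simp [adjMat, toBlocks₁₂, Rgraph, bipGraph_adj_inl_inr, one_apply, Fin.ext_iff]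
  · split_ifs <;> first | rfl | omega
  · omega
  · fin_cases i <;> fin_cases j <;> simp [cornerR]

theorem toBlocks₁₂_adjMat_Qgraph_submatrix (n : ℕ) :
    (adjMat (Qgraph (n + 3))).toBlocks₁₂.submatrix finSumFinEquiv
        (finSumFinEquiv : Fin n ⊕ Fin 4 ≃ _) =
      fromBlocks 1 (vecMulVec 1 1) 0 cornerQ := by
  ext (i | i) (j | j) <;>
    simp [adjMat, toBlocks₁₂, Qgraph, bipGraph_adj_inl_inr, one_apply, Fin.ext_iff]
  · split_ifs <;> first | rfl | omega
  · fin_cases i <;> fin_cases j <;> simp [cornerQ]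

/-- For `k ≥ 3`, the characteristic polynomials of the adjacency matrices of `ℛ_{2k+1}` and
`𝒬_{2k+1}` are both equal to `X (X² − 4(k−2)) (X² − 1)^{k−1}`; in particular the two graphs
are cospectral. -/
theorem charpoly_Rgraph_Qgraph (k : ℕ) (hk : 3 ≤ k) :
    (adjMat (Rgraph k)).charpoly =
        X * (X ^ 2 - C (4 * ((k : ℝ) - 2))) * (X ^ 2 - 1) ^ (k - 1) ∧
      (adjMat (Qgraph k)).charpoly =
        X * (X ^ 2 - C (4 * ((k : ℝ) - 2))) * (X ^ 2 - 1) ^ (k - 1) := by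
  obtain ⟨n, rfl⟩ := Nat.exists_eq_add_of_le' hk
  exact ⟨charpoly_adjMat_bipGraph_of_submatrix_eq n _ cornerR cornerR_mul_transpose
      cornerR_mulVec_one (toBlocks₁₂_adjMat_Rgraph_submatrix n),
    charpoly_adjMat_bipGraph_of_submatrix_eq n _ cornerQ cornerQ_mul_transpose
      cornerQ_mulVec_one (toBlocks₁₂_adjMat_Qgraph_submatrix n)⟩
end
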